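/- Let G be a finite connected simple graph with at least one edge, having exactly m edges and vertex set {x_1,…,x_n}, and let I = I(G) ⊂ K[x_1,…,x_n] be its edge ideal over a field K. Then v(I^k) = 2k − 1 for all k ≥ m + 1. -/

import Mathlib

open MvPolynomial

/-- A graded (homogeneous) ideal: one generated by homogeneous polynomials. -/
def IsHomogeneousIdeal {K : Type*} [Field K] {n : ℕ}
    (I : Ideal (MvPolynomial (Fin n) K)) : Prop :=
  ∃ G : Set (MvPolynomial (Fin n) K),
    (∀ f ∈ G, ∃ d, f.IsHomogeneous d) ∧ I = Ideal.span G

/-- `Ass(I)`: the associated primes of `S/I`. -/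
def Ass {K : Type*} [Field K] {n : ℕ} (I : Ideal (MvPolynomial (Fin n) K)) :
    Set (Ideal (MvPolynomial (Fin n) K)) :=
  associatedPrimes (MvPolynomial (Fin n) K) (MvPolynomial (Fin n) K ⧸ I)

/-- The local v-number `v_p(I)`. -/
noncomputable def vNumberAt {K : Type*} [Field K] {n : ℕ}
    (I p : Ideal (MvPolynomial (Fin n) K)) : ℕ :=
  sInf {d | ∃ f : MvPolynomial (Fin n) K, f.IsHomogeneous d ∧
    I.colon (Ideal.span {f}) = p}

/-- The v-number `v(I)`. -/
noncomputable def vNumber {K : Type*} [Field K] {n : ℕ}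
    (I : Ideal (MvPolynomial (Fin n) K)) : ℕ :=
  sInf {d | ∃ f : MvPolynomial (Fin n) K, ∃ p ∈ Ass I, f.IsHomogeneous d ∧
    I.colon (Ideal.span {f}) = p}

/-- `α(J)`: the least degree of a nonzero element of `J`. -/
noncomputable def alphaNum {K : Type*} [Field K] {n : ℕ}
    (J : Ideal (MvPolynomial (Fin n) K)) : ℕ :=
  sInf {d | ∃ f ∈ J, f ≠ 0 ∧ f.totalDegree = d}

/-- `c(I) = max{α(p) : p ∈ Ass(I)}`. -/
noncomputable def cNum {K : Type*} [Field K] {n : ℕ}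
    (I : Ideal (MvPolynomial (Fin n) K)) : ℕ :=
  sSup (alphaNum '' Ass I)

namespace Stmt13Aux

open SimpleGraph


variable {V : Type*} [DecidableEq V] {G : SimpleGraph V}

lemma edge_end_of_path {x u : V} (P : G.Walk x u) (hP : P.IsPath)
    (he : s(x, u) ∈ P.edges) : P.length = 1 := by
  cases P with
  | nil => simp at he
  | @cons _ y _ h' Q =>
    rw [Walk.edges_cons, List.mem_cons] at he
    rcases he with he | he
    · rw [Sym2.eq_iff] at he
      rcases he with ⟨-, rfl⟩ | ⟨rfl, rfl⟩
      · have : Q = Walk.nil := by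
          have h2 := SimpleGraph.Path.loop_eq ⟨Q, hP.of_cons⟩
          simpa using congrArg Subtype.val h2
        simp [this]
      · exact absurd rfl h'.ne
    · have hx : x ∈ Q.support := Walk.fst_mem_support_of_mem_edges Q he
      rw [Walk.cons_isPath_iff] at hP
      exact absurd hx hP.2

lemma exists_odd_closed_trail : ∀ (L : ℕ) {u : V} (W : G.Walk u u), W.length = L → Odd L →
    ∃ (z : V) (C : G.Walk z z), C.IsTrail ∧ Odd C.length := by
  intro L
  induction L using Nat.strong_induction_on with
  | _ L ih =>
    intro u W hL hodd
    cases W with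
    | nil => rw [← hL] at hodd; simp [Nat.odd_iff] at hodd
    | @cons _ x _ h W₁ =>
      by_cases hN : W₁.support.Nodup
      · refine ⟨u, Walk.cons h W₁, ?_, ?_⟩
        · rw [Walk.isTrail_cons]
          have hPath : W₁.IsPath := (Walk.isPath_def _).mpr hN
          refine ⟨hPath.isTrail, fun he => ?_⟩
          have he' : s(x, u) ∈ W₁.edges := by rwa [Sym2.eq_swap] at he
          have h1 := edge_end_of_path W₁ hPath he'
          rw [← hL] at hodd
          simp [Walk.length_cons, h1, Nat.odd_iff] at hodd
        · rwa [hL]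
      · obtain ⟨z, hz2⟩ : ∃ z, 2 ≤ W₁.support.count z := by
          by_contra hc
          push_neg at hc
          exact hN (List.nodup_iff_count_le_one.mpr fun z => by have := hc z; omega)
        have hzmem : z ∈ W₁.support := by
          rw [← List.count_pos_iff]; omega
        have hspec := W₁.take_spec hzmem
        have hcount1 := W₁.count_support_takeUntil_eq_one hzmem
        have hz2' : z ∈ (W₁.dropUntil z hzmem).support.tail := by
          have hsupp : W₁.support
              = (W₁.takeUntil z hzmem).support ++ (W₁.dropUntil z hzmem).support.tail := by
            conv_lhs => rw [← hspec]
            rw [Walk.support_append]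
          rw [hsupp, List.count_append] at hz2
          rw [← List.count_pos_iff]
          omega
        have hlen : (W₁.takeUntil z hzmem).length + (W₁.dropUntil z hzmem).length
            = W₁.length := by
          conv_rhs => rw [← hspec]
          rw [Walk.length_append]
        revert hz2'
        cases hQ2 : W₁.dropUntil z hzmem with
        | nil => intro hz2'; simp at hz2'
        | @cons _ y _ h₂ Q₃ =>
          intro hz2'
          rw [Walk.support_cons] at hz2'
          simp only [List.tail_cons] at hz2'
          have hlen3 : (Q₃.takeUntil z hz2').length + (Q₃.dropUntil z hz2').length
              = Q₃.length := by
            conv_rhs => rw [← Q₃.take_spec hz2']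
            rw [Walk.length_append]
          -- two closed walks
          set C₁ : G.Walk z z := Walk.cons h₂ (Q₃.takeUntil z hz2') with hC₁
          set C₂ : G.Walk u u := Walk.cons h ((W₁.takeUntil z hzmem).append
            (Q₃.dropUntil z hz2')) with hC₂
          have hsum : C₁.length + C₂.length = L := by
            rw [← hL]
            simp only [hC₁, hC₂, Walk.length_cons, Walk.length_append]
            have : Q₃.length + 1 = (W₁.dropUntil z hzmem).length := by rw [hQ2]; simp
            omega
          have hC₁pos : 0 < C₁.length := by simp [hC₁]
          have hC₂pos : 0 < C₂.length := by simp [hC₂]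
          rcases Nat.even_or_odd C₁.length with hev | hod
          · have hodd₂ : Odd C₂.length := by
              rw [Nat.odd_iff] at hodd ⊢
              rw [Nat.even_iff] at hev
              omega
            exact ih C₂.length (by omega) C₂ rfl hodd₂
          · exact ih C₁.length (by omega) C₁ rfl hod

lemma first_hit {z₀ : V} (C : G.Walk z₀ z₀) :
    ∀ {v z : V} (P : G.Walk v z), P.IsPath → z ∈ C.support →
      ∃ (w : V) (hw : w ∈ C.support) (P₁ : G.Walk v w),
        P₁.IsTrail ∧ (∀ e ∈ P₁.edges, e ∉ C.edges) ∧ P₁.support ⊆ P.support := by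
  intro v z P
  induction P with
  | nil =>
    intro _ hz
    exact ⟨_, hz, Walk.nil, Walk.IsTrail.nil, by simp, by simp⟩
  | @cons v y _ h Q ih =>
    intro hP hz
    by_cases hv : v ∈ C.support
    · exact ⟨v, hv, Walk.nil, Walk.IsTrail.nil, by simp, by simp⟩
    · obtain ⟨w, hw, P₁, hT, hE, hS⟩ := ih hP.of_cons hz
      refine ⟨w, hw, Walk.cons h P₁, ?_, ?_, ?_⟩
      · rw [Walk.isTrail_cons]
        refine ⟨hT, fun he => ?_⟩
        have : v ∈ P₁.support := Walk.fst_mem_support_of_mem_edges P₁ he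
        rw [Walk.cons_isPath_iff] at hP
        exact hP.2 (hS this)
      · intro e he
        rw [Walk.edges_cons, List.mem_cons] at he
        rcases he with rfl | he
        · intro heC
          exact hv (Walk.fst_mem_support_of_mem_edges C heC)
        · exact hE e he
      · rw [Walk.support_cons, Walk.support_cons]
        exact List.cons_subset_cons _ hS

lemma trail_append {a b c : V} {p : G.Walk a b} {q : G.Walk b c} (hp : p.IsTrail)
    (hq : q.IsTrail) (hd : ∀ e ∈ p.edges, e ∉ q.edges) : (p.append q).IsTrail := by
  rw [Walk.isTrail_def, Walk.edges_append]
  exact List.Nodup.append hp.edges_nodup hq.edges_nodup hd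

lemma main_graph (hconn : G.Connected) {a₀ b₀ : V} (hab : G.Adj a₀ b₀) :
    ∃ (t t' : V) (wt : V → ℕ) (c : ℕ), G.Adj t t' ∧ 0 < c ∧
      (∀ i j, G.Adj i j → wt i + wt j = c) ∧ wt t + 1 = c ∧
      ∀ i, 0 < wt i → ∃ T : G.Walk i t, T.IsTrail ∧ Odd T.length := by
  classical
  by_cases hP : ∃ (u : V) (W : G.Walk u u), Odd W.length
  · obtain ⟨u, W, hW⟩ := hP
    obtain ⟨z, C, hCt, hCodd⟩ := exists_odd_closed_trail W.length W rfl hW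
    obtain ⟨y, hzy⟩ : ∃ y, G.Adj z y := by
      cases C with
      | nil => simp [Nat.odd_iff] at hCodd
      | cons h _ => exact ⟨_, h⟩
    refine ⟨z, y, fun _ => 1, 2, hzy, two_pos, fun _ _ _ => rfl, rfl, ?_⟩
    intro v _
    obtain ⟨Wv⟩ := hconn.preconnected v z
    obtain ⟨w, hw, P₁, hT, hE, -⟩ := first_hit C Wv.bypass Wv.bypass_isPath C.start_mem_support
    have harc : (C.takeUntil w hw).length + (C.dropUntil w hw).length = C.length := by
      conv_rhs => rw [← C.take_spec hw]
      rw [Walk.length_append]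
    by_cases hpar : Odd (P₁.length + (C.dropUntil w hw).length)
    · refine ⟨P₁.append (C.dropUntil w hw), ?_, ?_⟩
      · exact trail_append hT (hCt.dropUntil hw)
          (fun e he hec => hE e he (Walk.edges_dropUntil_subset _ hw hec))
      · rwa [Walk.length_append]
    · refine ⟨P₁.append (C.takeUntil w hw).reverse, ?_, ?_⟩
      · refine trail_append hT (Walk.IsTrail.reverse _ (hCt.takeUntil hw)) ?_
        intro e he hec
        rw [Walk.edges_reverse, List.mem_reverse] at hec
        exact hE e he (Walk.edges_takeUntil_subset _ hw hec)
      · rw [Walk.length_append, Walk.length_reverse]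
        rw [Nat.odd_iff] at hCodd ⊢
        rw [Nat.odd_iff] at hpar
        omega
  · push_neg at hP
    have par : ∀ {s t : V} (W₁ W₂ : G.Walk s t), (Odd W₁.length ↔ Odd W₂.length) := by
      intro s t W₁ W₂
      have := hP s (W₁.append W₂.reverse)
      rw [Walk.length_append, Walk.length_reverse, Nat.odd_iff] at this
      rw [Nat.odd_iff, Nat.odd_iff]
      omega
    set wt : V → ℕ := fun i => if (∃ W : G.Walk i b₀, Odd W.length) then 1 else 0 with hwt
    have wt1 : ∀ i, (∃ W : G.Walk i b₀, Odd W.length) → wt i = 1 := by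
      intro i h; simp only [hwt]; rw [if_pos h]
    have wt0 : ∀ i, ¬ (∃ W : G.Walk i b₀, Odd W.length) → wt i = 0 := by
      intro i h; simp only [hwt]; rw [if_neg h]
    refine ⟨b₀, a₀, wt, 1, hab.symm, one_pos, ?_, ?_, ?_⟩
    · intro i j hij
      obtain ⟨Wj⟩ := hconn.preconnected j b₀
      by_cases hj : Odd Wj.length
      · rw [wt1 j ⟨Wj, hj⟩, wt0 i, zero_add]
        rintro ⟨Wi, hWi⟩
        have h2 := par Wi (Walk.cons hij Wj)
        rw [Walk.length_cons, Nat.odd_iff, Nat.odd_iff] at h2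
        rw [Nat.odd_iff] at hWi hj
        omega
      · have hj0 : ¬ (∃ W : G.Walk j b₀, Odd W.length) :=
          fun h => hj ((par Wj h.choose).mpr h.choose_spec)
        have hi1 : ∃ W : G.Walk i b₀, Odd W.length := by
          refine ⟨Walk.cons hij Wj, ?_⟩
          rw [Walk.length_cons, Nat.odd_iff]
          rw [Nat.odd_iff] at hj
          omega
        rw [wt1 i hi1, wt0 j hj0]
    · have hb : ¬ (∃ W : G.Walk b₀ b₀, Odd W.length) := by
        rintro ⟨Wb, hWb⟩
        have := (par Wb Walk.nil).mp hWb
        simp [Nat.odd_iff] at this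
      rw [wt0 b₀ hb]
    · intro i hi
      have hex : ∃ W : G.Walk i b₀, Odd W.length := by
        by_contra hno
        rw [wt0 i hno] at hi
        exact absurd hi (by omega)
      obtain ⟨W, hW⟩ := hex
      exact ⟨W.bypass, W.bypass_isPath.isTrail, (par W.bypass W).mpr hW⟩


open MvPolynomial


variable {n : ℕ}

noncomputable def ev : Sym2 (Fin n) → (Fin n →₀ ℕ) :=
  Sym2.lift ⟨fun i j => Finsupp.single i 1 + Finsupp.single j 1, fun i j => add_comm _ _⟩

@[simp] lemma ev_mk (i j : Fin n) :
    ev s(i, j) = Finsupp.single i 1 + Finsupp.single j 1 := rfl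

def SumSet (G : SimpleGraph (Fin n)) (k : ℕ) : Set (Fin n →₀ ℕ) :=
  {s | ∃ l : Multiset (Sym2 (Fin n)), (∀ e ∈ l, e ∈ G.edgeSet) ∧ Multiset.card l = k ∧
    (l.map ev).sum = s}

variable {G : SimpleGraph (Fin n)}

lemma sumset_add {s t : Fin n →₀ ℕ} {k₁ k₂ : ℕ} (hs : s ∈ SumSet G k₁)
    (ht : t ∈ SumSet G k₂) : s + t ∈ SumSet G (k₁ + k₂) := by
  obtain ⟨l₁, h₁, c₁, e₁⟩ := hs
  obtain ⟨l₂, h₂, c₂, e₂⟩ := ht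
  refine ⟨l₁ + l₂, fun e he => ?_, by simp [c₁, c₂], by simp [← e₁, ← e₂]⟩
  rcases Multiset.mem_add.mp he with h | h
  exacts [h₁ e h, h₂ e h]

lemma sumset_edge {i j : Fin n} (h : G.Adj i j) : ev s(i, j) ∈ SumSet G 1 :=
  ⟨{s(i, j)}, by simpa using h, by simp, by simp⟩

lemma sumset_nsmul {e : Sym2 (Fin n)} (h : e ∈ G.edgeSet) (r : ℕ) :
    r • ev e ∈ SumSet G r := by
  refine ⟨Multiset.replicate r e, fun x hx => ?_, by simp, ?_⟩
  · rw [Multiset.eq_of_mem_replicate hx]; exact h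
  · rw [Multiset.map_replicate, Multiset.sum_replicate]

lemma weight_ev {wt : Fin n → ℕ} {c : ℕ} (hwt : ∀ i j, G.Adj i j → wt i + wt j = c)
    {e : Sym2 (Fin n)} (he : e ∈ G.edgeSet) : Finsupp.weight wt (ev e) = c := by
  induction e using Sym2.ind with
  | _ i j =>
    rw [SimpleGraph.mem_edgeSet] at he
    rw [ev_mk, map_add]
    have h1 : ∀ a : Fin n, Finsupp.weight wt (Finsupp.single a 1) = wt a := by
      intro a
      rw [Finsupp.weight_apply, Finsupp.sum_single_index] <;> simp
    rw [h1, h1]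
    exact hwt _ _ he

lemma weight_single (wt : Fin n → ℕ) (a : Fin n) :
    Finsupp.weight wt (Finsupp.single a 1) = wt a := by
  rw [Finsupp.weight_apply, Finsupp.sum_single_index] <;> simp

lemma weight_sumset {wt : Fin n → ℕ} {c : ℕ} (hwt : ∀ i j, G.Adj i j → wt i + wt j = c)
    {k : ℕ} {s : Fin n →₀ ℕ} (hs : s ∈ SumSet G k) : Finsupp.weight wt s = c * k := by
  obtain ⟨l, hmem, hcard, rfl⟩ := hs
  subst hcard
  induction l using Multiset.induction_on with
  | empty => simp
  | cons e l ih =>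
    rw [Multiset.map_cons, Multiset.sum_cons, map_add,
      weight_ev hwt (hmem e (by simp)), ih (fun x hx => hmem x (by simp [hx]))]
    simp [Nat.mul_succ, Nat.mul_add]
    ring

lemma weight_mono {wt : Fin n → ℕ} {s t : Fin n →₀ ℕ} (h : s ≤ t) :
    Finsupp.weight wt s ≤ Finsupp.weight wt t := by
  obtain ⟨d, rfl⟩ := le_iff_exists_add.mp h
  rw [map_add]
  exact Nat.le_add_right _ _

lemma odd_walk_sum : ∀ (L : ℕ) {u v : Fin n} (W : G.Walk u v), W.length = L → Odd L →
    Finsupp.single u 1 + Finsupp.single v 1 + (((W.edges : Multiset _)).map ev).sum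
      ∈ SumSet G (L + 1) := by
  intro L
  induction L using Nat.strong_induction_on with
  | _ L ih =>
    intro u v W hL hodd
    cases W with
    | nil => rw [← hL] at hodd; simp [Nat.odd_iff] at hodd
    | @cons _ x _ h W₁ =>
      cases W₁ with
      | nil =>
        rw [← hL]
        simp only [SimpleGraph.Walk.edges_cons, SimpleGraph.Walk.edges_nil,
          SimpleGraph.Walk.length_cons, SimpleGraph.Walk.length_nil]
        refine ⟨{s(u, v), s(u, v)}, fun e he => ?_, by simp, ?_⟩
        · rw [Multiset.insert_eq_cons, Multiset.mem_cons, Multiset.mem_singleton] at he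
          rcases he with rfl | rfl <;> exact h
        · simp only [Multiset.insert_eq_cons, Multiset.map_cons, Multiset.map_singleton,
            Multiset.sum_cons, Multiset.sum_singleton, ev_mk, Multiset.coe_singleton]
          try abel
      | @cons _ y _ h₂ W₂ =>
        have hL2 : W₂.length + 2 = L := by
          rw [← hL]; simp [SimpleGraph.Walk.length_cons]
        have hodd₂ : Odd W₂.length := by
          rw [Nat.odd_iff] at hodd ⊢; omega
        have ihr := ih W₂.length (by omega) W₂ rfl hodd₂
        have hmem := sumset_add (sumset_add (sumset_edge h) (sumset_edge h)) ihr
        have hcnt : 1 + 1 + (W₂.length + 1) = L + 1 := by omega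
        rw [hcnt] at hmem
        have heq : Finsupp.single u 1 + Finsupp.single v 1 +
            (((SimpleGraph.Walk.cons h (SimpleGraph.Walk.cons h₂ W₂)).edges : Multiset _).map
              ev).sum
            = ev s(u, x) + ev s(u, x) +
              (Finsupp.single y 1 + Finsupp.single v 1 +
                ((W₂.edges : Multiset _).map ev).sum) := by
          simp only [SimpleGraph.Walk.edges_cons]
          simp only [← Multiset.cons_coe, Multiset.map_cons, Multiset.sum_cons, ev_mk]
          abel
        rw [heq]
        exact hmem

lemma gens_eq {K : Type*} [Field K] :
    {f : MvPolynomial (Fin n) K | ∃ i j : Fin n, G.Adj i j ∧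
      f = (X i : MvPolynomial (Fin n) K) * X j}
      = (fun s => monomial s (1 : K)) '' SumSet G 1 := by
  ext f
  simp only [Set.mem_setOf_eq, Set.mem_image]
  constructor
  · rintro ⟨i, j, hadj, rfl⟩
    refine ⟨ev s(i, j), sumset_edge hadj, ?_⟩
    rw [ev_mk, X, X, monomial_mul, one_mul]
  · rintro ⟨s, ⟨l, hmem, hc, rfl⟩, rfl⟩
    obtain ⟨e, rfl⟩ := Multiset.card_eq_one.mp hc
    induction e using Sym2.ind with
    | _ i j =>
      refine ⟨i, j, (SimpleGraph.mem_edgeSet _).mp (hmem _ (by simp)), ?_⟩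
      rw [X, X, monomial_mul, one_mul]
      simp [ev_mk]

lemma pow_eq_span {K : Type*} [Field K] {I : Ideal (MvPolynomial (Fin n) K)}
    (hI : I = Ideal.span {f | ∃ i j : Fin n, G.Adj i j ∧
      f = (X i : MvPolynomial (Fin n) K) * X j}) :
    ∀ k : ℕ, I ^ k = Ideal.span ((fun s => monomial s (1 : K)) '' SumSet G k) := by
  intro k
  induction k with
  | zero =>
    have h0 : SumSet G 0 = {(0 : Fin n →₀ ℕ)} := by
      ext s
      constructor
      · rintro ⟨l, -, hc, rfl⟩
        rw [Multiset.card_eq_zero] at hc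
        subst hc
        simp
      · rintro rfl
        exact ⟨0, by simp, by simp, by simp⟩
    rw [pow_zero, h0, Set.image_singleton]
    rw [monomial_zero', map_one, Ideal.one_eq_top, Ideal.span_singleton_one]
  | succ k ih =>
    rw [pow_succ, ih, hI, gens_eq (G := G), Ideal.span_mul_span']
    congr 1
    ext f
    constructor
    · rintro ⟨a, ⟨s, hs, rfl⟩, b, ⟨d, ⟨l, hmem, hc, rfl⟩, rfl⟩, rfl⟩
      rw [Multiset.card_eq_one] at hc
      obtain ⟨e, rfl⟩ := hc
      refine ⟨s + (({e} : Multiset _).map ev).sum, ?_, ?_⟩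
      · exact sumset_add hs ⟨{e}, fun x hx => hmem x hx, by simp, rfl⟩
      · beta_reduce
        rw [monomial_mul, one_mul]
    · rintro ⟨s, ⟨l, hmem, hc, rfl⟩, rfl⟩
      have hl : l ≠ 0 := by
        intro h
        rw [h] at hc
        simp at hc
      obtain ⟨e, he⟩ := Multiset.exists_mem_of_ne_zero hl
      obtain ⟨l', rfl⟩ := Multiset.exists_cons_of_mem he
      refine ⟨monomial ((l'.map ev).sum) 1, ⟨(l'.map ev).sum, ⟨l', fun x hx => hmem x (by simp [hx]), by simpa using hc, rfl⟩, rfl⟩,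
        monomial (ev e) 1, ⟨ev e, ⟨{e}, by simpa using hmem e (by simp), by simp, by simp⟩, rfl⟩, ?_⟩
      beta_reduce
      rw [monomial_mul, one_mul, Multiset.map_cons, Multiset.sum_cons]
      rw [add_comm]

lemma prime_span_X_image {K : Type*} [Field K] (A : Set (Fin n)) :
    (Ideal.span (MvPolynomial.X '' A : Set (MvPolynomial (Fin n) K))).IsPrime := by
  classical
  set φ : MvPolynomial (Fin n) K →ₐ[K] MvPolynomial (Fin n) K :=
    aeval (fun i => if i ∈ A then 0 else X i) with hφ
  have hle : Ideal.span (MvPolynomial.X '' A : Set (MvPolynomial (Fin n) K))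
      ≤ RingHom.ker φ.toRingHom := by
    rw [Ideal.span_le]
    rintro x ⟨i, hi, rfl⟩
    simp [RingHom.mem_ker, hφ, hi]
  have hsub : ∀ g : MvPolynomial (Fin n) K,
      g - φ g ∈ Ideal.span (MvPolynomial.X '' A : Set (MvPolynomial (Fin n) K)) := by
    intro g
    induction g using MvPolynomial.induction_on with
    | C a => simp [hφ, aeval_C, algebraMap_eq]
    | add p q hp hq =>
      have h := Ideal.add_mem _ hp hq
      rw [map_add]
      convert h using 1
      ring
    | mul_X p i hp =>
      rw [map_mul]
      by_cases hi : i ∈ A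
      · have hXi : (X i : MvPolynomial (Fin n) K) ∈ Ideal.span (MvPolynomial.X '' A) :=
          Ideal.subset_span ⟨i, hi, rfl⟩
        have hz : φ (X i) = 0 := by simp [hφ, hi]
        rw [hz, mul_zero, sub_zero]
        exact Ideal.mul_mem_left _ _ hXi
      · have hz : φ (X i) = X i := by simp [hφ, hi]
        rw [hz]
        have : p * X i - φ p * X i = (p - φ p) * X i := by ring
        rw [this]
        exact Ideal.mul_mem_right _ _ hp
  constructor
  · intro htop
    have h1 : (1 : MvPolynomial (Fin n) K) ∈
        Ideal.span (MvPolynomial.X '' A : Set (MvPolynomial (Fin n) K)) := by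
      rw [htop]; trivial
    have := hle h1
    rw [RingHom.mem_ker] at this
    simp at this
  · intro g h hgh
    have h0 : φ g * φ h = 0 := by
      rw [← map_mul]
      exact RingHom.mem_ker.mp (hle hgh)
    rcases mul_eq_zero.mp h0 with h' | h'
    · left
      have := hsub g
      rwa [h', sub_zero] at this
    · right
      have := hsub h
      rwa [h', sub_zero] at this

lemma colon_eq_annihilator {K : Type*} [Field K] (J : Ideal (MvPolynomial (Fin n) K))
    (f : MvPolynomial (Fin n) K) :
    J.colon (Ideal.span {f})
      = (Submodule.span (MvPolynomial (Fin n) K) {(Ideal.Quotient.mk J f)}).annihilator := by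
  ext r
  rw [Ideal.mem_colon_span_singleton, Submodule.mem_annihilator_span_singleton,
    ← Ideal.Quotient.mk_eq_mk, ← Submodule.Quotient.mk_smul, Submodule.Quotient.mk_eq_zero,
    smul_eq_mul]


end Stmt13Aux

open Stmt13Aux

/-- Let `G` be a finite connected simple graph with at least one edge and
exactly `m` edges, and `I = I(G)` its edge ideal. Then `v(I^k) = 2k − 1` for all
`k ≥ m + 1`. -/

theorem stmt13 {K : Type*} [Field K] {n : ℕ}
    (G : SimpleGraph (Fin n)) [DecidableRel G.Adj]
    (hconn : G.Connected) (m : ℕ) (hm : G.edgeFinset.card = m) (hedge : 0 < m)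
    (I : Ideal (MvPolynomial (Fin n) K))
    (hI : I = Ideal.span {f | ∃ i j : Fin n, G.Adj i j ∧
      f = (X i : MvPolynomial (Fin n) K) * X j}) :
    ∀ k : ℕ, m + 1 ≤ k → (vNumber (I ^ k) : ℤ) = 2 * k - 1 := by
  intro k hk
  obtain ⟨a₀, b₀, hab⟩ : ∃ a b : Fin n, G.Adj a b := by
    obtain ⟨e, he⟩ := Finset.card_pos.mp (by omega : 0 < G.edgeFinset.card)
    rw [SimpleGraph.mem_edgeFinset] at he
    induction e using Sym2.ind with
    | _ i j => exact ⟨i, j, (SimpleGraph.mem_edgeSet _).mp he⟩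
  obtain ⟨t, t', wt, c, htt', hc, hwt, htc, htrail⟩ := main_graph hconn hab
  have hpow := pow_eq_span (G := G) hI
  have hones : ∀ i j : Fin n, G.Adj i j → (1 : Fin n → ℕ) i + (1 : Fin n → ℕ) j = 2 :=
    fun _ _ _ => rfl
  set TG : Fin n →₀ ℕ := ((G.edgeFinset.val).map ev).sum with hTG
  have hTGmem : TG ∈ SumSet G m := by
    refine ⟨G.edgeFinset.val, fun e he => ?_, ?_, rfl⟩
    · exact (SimpleGraph.mem_edgeFinset).mp (Finset.mem_val.mp he)
    · exact hm
  have htt'edge : s(t, t') ∈ G.edgeSet := (SimpleGraph.mem_edgeSet _).mpr htt'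
  set F : Fin n →₀ ℕ := Finsupp.single t 1 + TG + (k - 1 - m) • ev s(t, t') with hF
  set f : MvPolynomial (Fin n) K := monomial F (1 : K) with hf
  set A : Set (Fin n) := {i | 0 < wt i} with hA
  set p : Ideal (MvPolynomial (Fin n) K) := Ideal.span (MvPolynomial.X '' A) with hp
  -- membership of X i * f in I ^ k for i with positive weight
  have hXmem : ∀ i : Fin n, 0 < wt i → (X i : MvPolynomial (Fin n) K) * f ∈ I ^ k := by
    intro i hi
    obtain ⟨T, hTt, hTodd⟩ := htrail i hi
    have hnodup : (T.edges : Multiset (Sym2 (Fin n))).Nodup := by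
      rw [Multiset.coe_nodup]
      exact hTt.edges_nodup
    have hsubE : (T.edges : Multiset (Sym2 (Fin n))) ≤ G.edgeFinset.val := by
      rw [Multiset.le_iff_subset hnodup]
      intro e he
      rw [Multiset.mem_coe] at he
      rw [Finset.mem_val, SimpleGraph.mem_edgeFinset]
      exact T.edges_subset_edgeSet he
    obtain ⟨u, hu⟩ := Multiset.le_iff_exists_add.mp hsubE
    have hcards : m = T.length + Multiset.card u := by
      have h1 := congrArg Multiset.card hu
      simp only [Multiset.card_add, Multiset.coe_card] at h1
      rw [SimpleGraph.Walk.length_edges] at h1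
      have h2 : Multiset.card G.edgeFinset.val = m := by exact hm
      omega
    have humem : ∀ e ∈ u, e ∈ G.edgeSet := by
      intro e he
      have : e ∈ G.edgeFinset.val := by
        rw [hu]
        exact Multiset.mem_add.mpr (Or.inr he)
      exact (SimpleGraph.mem_edgeFinset).mp (Finset.mem_val.mp this)
    have hdecomp : Finsupp.single i 1 + F =
        (Finsupp.single i 1 + Finsupp.single t 1 + ((T.edges : Multiset _).map ev).sum)
          + (u.map ev).sum + (k - 1 - m) • ev s(t, t') := by
      rw [hF, hTG, hu, Multiset.map_add, Multiset.sum_add]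
      abel
    have hsum : Finsupp.single i 1 + F
        ∈ SumSet G ((T.length + 1) + Multiset.card u + (k - 1 - m)) := by
      rw [hdecomp]
      exact sumset_add (sumset_add (odd_walk_sum T.length T rfl hTodd)
        ⟨u, humem, rfl, rfl⟩) (sumset_nsmul htt'edge _)
    have hcnt : (T.length + 1) + Multiset.card u + (k - 1 - m) = k := by omega
    rw [hcnt] at hsum
    rw [hpow k]
    have hXf : (X i : MvPolynomial (Fin n) K) * f = monomial (Finsupp.single i 1 + F) 1 := by
      rw [hf, X, monomial_mul, one_mul]
    rw [hXf]
    exact Ideal.subset_span ⟨_, hsum, rfl⟩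
  -- weight of F
  have hWF : ∀ (w' : Fin n → ℕ) (c' : ℕ), (∀ i j, G.Adj i j → w' i + w' j = c') →
      w' t + 1 = c' → Finsupp.weight w' F = c' * k - 1 := by
    intro w' c' hw' htc'
    rw [hF, map_add, map_add, map_nsmul, weight_single, weight_sumset hw' hTGmem,
      weight_ev hw' htt'edge, smul_eq_mul, mul_comm (k - 1 - m) c']
    have h3 : k = m + 1 + (k - 1 - m) := by omega
    have h2 : c' * k = c' * m + c' + c' * (k - 1 - m) := by
      conv_lhs => rw [h3]
      ring
    set A1 := c' * m with hA1
    set A2 := c' * (k - 1 - m) with hA2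
    set A3 := c' * k with hA3
    omega
  have hdegF : Finsupp.weight (1 : Fin n → ℕ) F = 2 * k - 1 := hWF _ 2 hones rfl
  have hfhom : f.IsHomogeneous (2 * k - 1) := by
    apply isHomogeneous_monomial
    rw [Finsupp.degree_eq_weight_one]
    exact hdegF
  -- the colon ideal computation
  have hcolon : (I ^ k).colon (Ideal.span {f}) = p := by
    apply le_antisymm
    · intro g hg
      have hgf : g * f ∈ I ^ k := Ideal.mem_colon_span_singleton.mp hg
      rw [hpow k, mem_ideal_span_monomial_image] at hgf
      rw [hp, mem_ideal_span_X_image]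
      intro ν hν
      have hmemsup : ν + F ∈ (g * f).support := by
        rw [mem_support_iff, hf, coeff_mul_monomial]
        simpa using mem_support_iff.mp hν
      obtain ⟨s₀, hs₀, hle⟩ := hgf _ hmemsup
      have h1 : Finsupp.weight wt s₀ = c * k := weight_sumset hwt hs₀
      have h2 := weight_mono (wt := wt) hle
      rw [h1, map_add, hWF wt c hwt htc] at h2
      have hck : 1 ≤ c * k := Nat.one_le_iff_ne_zero.mpr
        (Nat.mul_ne_zero (by omega) (by omega))
      have hν1 : 1 ≤ Finsupp.weight wt ν := by omega
      by_contra hno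
      push_neg at hno
      have hzero : Finsupp.weight wt ν = 0 := by
        rw [Finsupp.weight_apply, Finsupp.sum]
        apply Finset.sum_eq_zero
        intro i hi
        by_cases hwi : 0 < wt i
        · rw [hno i hwi]
          simp
        · have hwi0 : wt i = 0 := by omega
          rw [hwi0]
          simp
      omega
    · rw [hp, Ideal.span_le]
      rintro x ⟨i, hi, rfl⟩
      exact Ideal.mem_colon_span_singleton.mpr (hXmem i hi)
  have hprime : p.IsPrime := hp ▸ prime_span_X_image A
  have hass : p ∈ Ass (I ^ k) := by
    refine (isAssociatedPrime_iff).mpr ⟨hprime, ⟨Ideal.Quotient.mk (I ^ k) f, ?_⟩⟩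
    rw [← hcolon, colon_eq_annihilator]
    ext r
    rw [Submodule.mem_annihilator_span_singleton, Submodule.mem_colon_singleton, Submodule.mem_bot]
  have hmem2k : (2 * k - 1) ∈ {d | ∃ f0 : MvPolynomial (Fin n) K, ∃ p0 ∈ Ass (I ^ k),
      f0.IsHomogeneous d ∧ (I ^ k).colon (Ideal.span {f0}) = p0} :=
    ⟨f, p, hass, hfhom, hcolon⟩
  have hlb : ∀ d ∈ {d | ∃ f0 : MvPolynomial (Fin n) K, ∃ p0 ∈ Ass (I ^ k),
      f0.IsHomogeneous d ∧ (I ^ k).colon (Ideal.span {f0}) = p0}, 2 * k - 1 ≤ d := by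
    rintro d ⟨f', p', hp'ass, hf'hom, hf'colon⟩
    have hp'prime : p'.IsPrime := hp'ass.isPrime
    have hf'ne : f' ≠ 0 := by
      rintro rfl
      have htop : p' = ⊤ := by
        rw [← hf'colon, eq_top_iff]
        intro r _
        rw [Ideal.mem_colon_span_singleton, mul_zero]
        exact (I ^ k).zero_mem
      exact hp'prime.ne_top htop
    have hXIk : (X a₀ * X b₀ : MvPolynomial (Fin n) K) ∈ I := by
      rw [hI]
      exact Ideal.subset_span ⟨a₀, b₀, hab, rfl⟩
    have hIkp : I ^ k ≤ p' := by
      rw [← hf'colon]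
      intro r hr
      exact Ideal.mem_colon_span_singleton.mpr (Ideal.mul_mem_right _ _ hr)
    have hXX : (X a₀ * X b₀ : MvPolynomial (Fin n) K) ∈ p' :=
      hp'prime.mem_of_pow_mem k (hIkp (Ideal.pow_mem_pow hXIk k))
    have hmain : ∀ v : Fin n, (X v : MvPolynomial (Fin n) K) ∈ p' → 2 * k - 1 ≤ d := by
      intro v hXv
      rw [← hf'colon] at hXv
      have hvf : (X v : MvPolynomial (Fin n) K) * f' ∈ I ^ k :=
        Ideal.mem_colon_span_singleton.mp hXv
      have hne : (X v : MvPolynomial (Fin n) K) * f' ≠ 0 :=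
        mul_ne_zero (X_ne_zero _) hf'ne
      have hhom : ((X v : MvPolynomial (Fin n) K) * f').IsHomogeneous (1 + d) :=
        (isHomogeneous_X _ _).mul hf'hom
      obtain ⟨μ, hμ⟩ := support_nonempty.mpr hne
      rw [hpow k, mem_ideal_span_monomial_image] at hvf
      obtain ⟨s₀, hs₀, hle⟩ := hvf μ hμ
      have hdeg : Finsupp.weight (1 : Fin n → ℕ) μ = 1 + d := hhom (mem_support_iff.mp hμ)
      have hs₀deg : Finsupp.weight (1 : Fin n → ℕ) s₀ = 2 * k := weight_sumset hones hs₀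
      have hmono := weight_mono (wt := (1 : Fin n → ℕ)) hle
      omega
    rcases hp'prime.mem_or_mem hXX with hXv | hXv
    exacts [hmain a₀ hXv, hmain b₀ hXv]
  have hval : vNumber (I ^ k) = 2 * k - 1 := by
    unfold vNumber
    exact le_antisymm (Nat.sInf_le hmem2k) (le_csInf ⟨_, hmem2k⟩ hlb)
  rw [hval]
  omega
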